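/- Let e = ⋀_{i=1}^{s} (ℓ_{i1} ∨ ℓ_{i2} ∨ ℓ_{i3}) be a 3CNF formula over propositional variables p₁,…,p_k, where each literal ℓ_{ij} is either some p_j or ∼p_j. Let e' be the conditional expression obtained from e by replacing every positive literal p_j by a fresh variable p̂_j and every negative literal ∼p_j by a fresh variable p̌_j (keeping the ∧ and ∨ structure), and define ē = ∼( e' ∧ ⋀_{j=1}^{k} ((p̂_j ∨ p̌_j) ∧ (∼p̂_j ∨ ∼p̌_j)) ), all connectives interpreted as GNW connectives. Then e is classically satisfiable (some 2-valued valuation makes e true) if and only if ē is not a weak GNW tautology (some 3-valued valuation gives ē the value 0). -/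
import Mathlib


/-- The three truth values `0`, `1`, `⊥`. -/
inductive Tri : Type
  | zero : Tri
  | one : Tri
  | bot : Tri
deriving DecidableEq

/-- The negation `∼` on `3`: `∼0 = 1`, `∼1 = 0`, `∼⊥ = ⊥`. -/
def triNeg : Tri → Tri
  | .zero => .one
  | .one => .zero
  | .bot => .bot

/-- GNW (strong Kleene) conjunction. -/
def gnwAnd (x y : Tri) : Tri :=
  match x, y with
  | .zero, _ => .zero
  | _, .zero => .zero
  | .one, .one => .one
  | _, _ => .bot

/-- GNW (strong Kleene) disjunction. -/
def gnwOr (x y : Tri) : Tri :=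
  match x, y with
  | .one, _ => .one
  | _, .one => .one
  | .zero, .zero => .zero
  | _, _ => .bot

/-- A literal: the variable `p_idx`, positive or negated. -/
structure Lit where
  idx : ℕ
  pos : Bool

/-- A 3CNF clause `ℓ₁ ∨ ℓ₂ ∨ ℓ₃`. -/
abbrev Clause := Lit × Lit × Lit

/-- Classical value of a literal under a 2-valued valuation. -/
def litCl (v : ℕ → Bool) (l : Lit) : Bool :=
  if l.pos then v l.idx else !(v l.idx)

/-- Classical value of a clause. -/
def clauseCl (v : ℕ → Bool) (c : Clause) : Bool :=
  litCl v c.1 || litCl v c.2.1 || litCl v c.2.2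

/-- Classical value of a 3CNF formula (a conjunction of clauses). -/
def cnfCl (v : ℕ → Bool) (f : List Clause) : Bool :=
  f.all (clauseCl v)

/-- The fresh variable replacing a literal: the positive literal `p_j` becomes the
variable `p̂_j` (coded `2*j`), the negative literal `∼p_j` becomes `p̌_j`
(coded `2*j+1`). Its GNW value under a 3-valued valuation. -/
def litTr (v : ℕ → Tri) (l : Lit) : Tri :=
  if l.pos then v (2 * l.idx) else v (2 * l.idx + 1)

/-- GNW value of the translated clause. -/
def clauseTr (v : ℕ → Tri) (c : Clause) : Tri :=
  gnwOr (gnwOr (litTr v c.1) (litTr v c.2.1)) (litTr v c.2.2)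

/-- Iterated GNW conjunction of a nonempty list of values. -/
def bigAnd : List Tri → Tri
  | [] => Tri.one
  | x :: xs => xs.foldl gnwAnd x

/-- GNW value of the guard `(p̂_j ∨ p̌_j) ∧ (∼p̂_j ∨ ∼p̌_j)` for variable `p_j`. -/
def guardTr (v : ℕ → Tri) (j : ℕ) : Tri :=
  gnwAnd (gnwOr (v (2 * j)) (v (2 * j + 1)))
    (gnwOr (triNeg (v (2 * j))) (triNeg (v (2 * j + 1))))

/-- GNW value of `ē = ∼(e' ∧ ⋀_{j<k} guard_j)` for the 3CNF `f` over variables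
`p_0, …, p_{k-1}`. -/
def ebarTr (v : ℕ → Tri) (f : List Clause) (k : ℕ) : Tri :=
  triNeg (gnwAnd (bigAnd (f.map (clauseTr v)))
    (bigAnd ((List.range k).map (guardTr v))))


lemma gnwAnd_eq_one {x y : Tri} : gnwAnd x y = .one ↔ x = .one ∧ y = .one := by
  cases x <;> cases y <;> simp [gnwAnd]

lemma gnwOr_eq_one {x y : Tri} : gnwOr x y = .one ↔ x = .one ∨ y = .one := by
  cases x <;> cases y <;> simp [gnwOr]

lemma triNeg_eq_one {x : Tri} : triNeg x = .one ↔ x = .zero := by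
  cases x <;> simp [triNeg]

lemma triNeg_eq_zero {x : Tri} : triNeg x = .zero ↔ x = .one := by
  cases x <;> simp [triNeg]

lemma foldl_gnwAnd_one (l : List Tri) (a : Tri) :
    l.foldl gnwAnd a = .one ↔ a = .one ∧ ∀ x ∈ l, x = .one := by
  induction l generalizing a with
  | nil => simp
  | cons b l ih =>
    simp only [List.foldl_cons, ih, gnwAnd_eq_one, List.mem_cons]
    constructor
    · rintro ⟨⟨ha, hb⟩, h⟩
      exact ⟨ha, fun x hx => hx.elim (fun h' => h' ▸ hb) (h x)⟩
    · rintro ⟨ha, h⟩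
      exact ⟨⟨ha, h b (Or.inl rfl)⟩, fun x hx => h x (Or.inr hx)⟩

lemma bigAnd_eq_one (l : List Tri) :
    bigAnd l = .one ↔ ∀ x ∈ l, x = .one := by
  cases l with
  | nil => simp [bigAnd]
  | cons a l =>
    simp only [bigAnd, foldl_gnwAnd_one, List.mem_cons]
    constructor
    · rintro ⟨ha, h⟩ x hx
      exact hx.elim (fun h' => h' ▸ ha) (h x)
    · intro h
      exact ⟨h a (Or.inl rfl), fun x hx => h x (Or.inr hx)⟩

/-- A 3CNF formula `f` over variables `p_0, …, p_{k-1}` is classically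
satisfiable iff `ē` is not a weak GNW tautology, i.e. some 3-valued valuation
gives `ē` the value `0`. -/
theorem cnf_sat_iff_ebar_not_weak_gnw_tautology
    (f : List Clause) (hf : f ≠ []) (k : ℕ) (hk : 0 < k)
    (hidx : ∀ c ∈ f, c.1.idx < k ∧ c.2.1.idx < k ∧ c.2.2.idx < k) :
    (∃ v : ℕ → Bool, cnfCl v f = true) ↔
      (∃ v : ℕ → Tri, ebarTr v f k = Tri.zero) := by
  constructor
  · rintro ⟨v, hv⟩
    refine ⟨fun n => if n % 2 = 0 then (if v (n / 2) then .one else .zero)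
      else (if v (n / 2) then .zero else .one), ?_⟩
    have h2j : ∀ j, (2 * j) % 2 = 0 ∧ (2 * j) / 2 = j ∧ (2 * j + 1) % 2 = 1 ∧
        (2 * j + 1) / 2 = j := by
      intro j; omega
    simp only [ebarTr, triNeg_eq_zero, gnwAnd_eq_one, bigAnd_eq_one, List.mem_map,
      List.mem_range]
    constructor
    · rintro x ⟨c, hc, rfl⟩
      have := (List.all_eq_true.mp hv) c hc
      simp only [clauseCl, Bool.or_eq_true] at this
      simp only [clauseTr, gnwOr_eq_one]
      have hl : ∀ l : Lit, litCl v l = true →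
          litTr (fun n => if n % 2 = 0 then (if v (n / 2) then Tri.one else Tri.zero)
            else (if v (n / 2) then Tri.zero else Tri.one)) l = .one := by
        intro l hl
        obtain ⟨e1, e2, e3, e4⟩ := h2j l.idx
        simp only [litCl] at hl
        simp only [litTr, e1, e2, e3, e4]
        by_cases hp : l.pos <;> simp [hp] at hl ⊢ <;> simp [hl]
      rcases this with (h | h) | h
      · exact Or.inl (Or.inl (hl _ h))
      · exact Or.inl (Or.inr (hl _ h))
      · exact Or.inr (hl _ h)
    · rintro x ⟨j, hj, rfl⟩
      obtain ⟨e1, e2, e3, e4⟩ := h2j j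
      simp only [guardTr, e1, e2, e3, e4, gnwAnd_eq_one, gnwOr_eq_one, triNeg_eq_one]
      by_cases hv' : v j <;> simp [hv', triNeg]
  · rintro ⟨v, hv⟩
    simp only [ebarTr, triNeg_eq_zero, gnwAnd_eq_one, bigAnd_eq_one, List.mem_map,
      List.mem_range] at hv
    obtain ⟨hcl, hgd⟩ := hv
    refine ⟨fun j => v (2 * j) = .one, ?_⟩
    rw [cnfCl, List.all_eq_true]
    intro c hc
    have hguard : ∀ j, j < k → (v (2 * j) = .one ∨ v (2 * j + 1) = .one) ∧
        (v (2 * j) = .zero ∨ v (2 * j + 1) = .zero) := by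
      intro j hj
      have := hgd _ ⟨j, hj, rfl⟩
      simp only [guardTr, gnwAnd_eq_one, gnwOr_eq_one, triNeg_eq_one] at this
      exact this
    have hctr := hcl _ ⟨c, hc, rfl⟩
    simp only [clauseTr, gnwOr_eq_one] at hctr
    simp only [clauseCl, Bool.or_eq_true]
    obtain ⟨hb1, hb2, hb3⟩ := hidx c hc
    have hl : ∀ l : Lit, l.idx < k → litTr v l = .one →
        litCl (fun j => decide (v (2 * j) = .one)) l = true := by
      intro l hlk h
      obtain ⟨h1, h2⟩ := hguard l.idx hlk
      simp only [litTr] at h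
      simp only [litCl]
      by_cases hp : l.pos <;> simp [hp] at h ⊢
      · exact h
      · rcases h2 with h2 | h2
        · simp [h2]
        · rw [h2] at h; exact absurd h (by simp)
    rcases hctr with (h | h) | h
    · exact Or.inl (Or.inl (hl _ hb1 h))
    · exact Or.inl (Or.inr (hl _ hb2 h))
    · exact Or.inr (hl _ hb3 h)
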